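/- arXiv:math/9808131 — 3 statements merged into one kernel-verified Lean document; each statement's English description precedes it below -/
import Mathlib

section
/- Let W = [[z₁, z₂],[z₃, z₄]] be a 2×2 block complex matrix which is a partial isometry, and let ε < 1/16. If ‖z₂‖ ≤ ε and ‖z₃‖ ≤ ε, then the diagonal block z₁ is 16ε-close to a partial isometry. -/
/-
The (1,1) block of `W Wᴴ W = W` reads `z₁ z₁ᴴ z₁ = z₁ - R`, where each term of `R` contains two of the
off-diagonal blocks, so `‖R‖ ≤ 3ε²` because all blocks of the contraction `W` have norm at most `1`.
Hence `p = z₁ᴴ z₁` satisfies `‖p² - p‖ ≤ 3ε²`, and its spectrum lies within `6ε²` of `{0, 1}`.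
Cutting off the small part of the spectrum and normalising the rest, `w = z₁ f(p)` with
`f t = t^{-1/2}` on `[1/2, ∞)` and `f = 0` below is a partial isometry (as `wᴴ w = (f² t)(p)` is a
projection), and `‖z₁ - w‖² = ‖((1 - f)² t)(p)‖ ≤ 6ε²`.
-/

open Matrix
open scoped Matrix.Norms.L2Operator

def IsPartialIsometry {m n : Type*} [Fintype m] [Fintype n] (v : Matrix m n ℂ) : Prop :=
  v * vᴴ * v = v

lemma Matrix.l2_opNorm_mul_mul_le {l m n o : Type*} [Fintype l] [Fintype m] [Fintype n] [Fintype o]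
    [DecidableEq m] [DecidableEq n] [DecidableEq o]
    (A : Matrix l m ℂ) (B : Matrix m n ℂ) (C : Matrix n o ℂ) :
    ‖A * B * C‖ ≤ ‖A‖ * ‖B‖ * ‖C‖ :=
  (l2_opNorm_mul _ _).trans (mul_le_mul_of_nonneg_right (l2_opNorm_mul _ _) (norm_nonneg _))

lemma Matrix.conjTranspose_mul_self_mul_of_isHermitian {m n : Type*} [Fintype m] [Fintype n]
    (x : Matrix m n ℂ) {c : Matrix n n ℂ} (hc : c.IsHermitian) :
    (x * c)ᴴ * (x * c) = c * (xᴴ * x) * c := by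
  rw [conjTranspose_mul, hc.eq, Matrix.mul_assoc, Matrix.mul_assoc, Matrix.mul_assoc]

namespace IsPartialIsometry

variable {m n : Type*} [Fintype m] [Fintype n] {v : Matrix m n ℂ}

lemma isStarProjection_conjTranspose_mul_self (hv : IsPartialIsometry v) :
    IsStarProjection (vᴴ * v) where
  isIdempotentElem := by rw [IsIdempotentElem, Matrix.mul_assoc, ← Matrix.mul_assoc v, hv]
  isSelfAdjoint := isHermitian_conjTranspose_mul_self v

lemma norm_le_one [DecidableEq n] (hv : IsPartialIsometry v) : ‖v‖ ≤ 1 := by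
  have := hv.isStarProjection_conjTranspose_mul_self.norm_le
  rw [l2_opNorm_conjTranspose_mul_self] at this
  nlinarith [norm_nonneg v]

lemma of_mul_conjTranspose_eq_one [DecidableEq m] (h : v * vᴴ = 1) : IsPartialIsometry v := by
  rw [IsPartialIsometry, h, Matrix.one_mul]

lemma of_conjTranspose_mul_eq_one [DecidableEq n] (h : vᴴ * v = 1) : IsPartialIsometry v := by
  rw [IsPartialIsometry, Matrix.mul_assoc, h, Matrix.mul_one]

end IsPartialIsometry

lemma Matrix.l2_opNorm_submatrix_le {m n m' n' : Type*} [Fintype m] [Fintype n] [Fintype m']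
    [Fintype n'] [DecidableEq n] [DecidableEq n'] (A : Matrix m n ℂ) {e : m' → m} {f : n' → n}
    (he : Function.Injective e) (hf : Function.Injective f) : ‖A.submatrix e f‖ ≤ ‖A‖ := by
  classical
  set P := (1 : Matrix m m ℂ).submatrix e id
  set Q := (1 : Matrix n n ℂ).submatrix id f
  have hPQ : A.submatrix e f = P * A * Q := by
    have hP := one_submatrix_mul e (Equiv.refl m) A
    have hQ := mul_submatrix_one (Equiv.refl n) f (A.submatrix e id)
    simp only [Equiv.coe_refl, Equiv.refl_symm, Function.id_comp, submatrix_submatrix,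
      Function.comp_id] at hP hQ
    rw [hP, hQ]
  have hP : ‖P‖ ≤ 1 := IsPartialIsometry.norm_le_one <| .of_mul_conjTranspose_eq_one <| by
    rw [conjTranspose_submatrix, conjTranspose_one, ← submatrix_mul _ _ _ _ _ Function.bijective_id,
      Matrix.one_mul, submatrix_one e he]
  have hQ : ‖Q‖ ≤ 1 := IsPartialIsometry.norm_le_one <| .of_conjTranspose_mul_eq_one <| by
    rw [conjTranspose_submatrix, conjTranspose_one, ← submatrix_mul _ _ _ _ _ Function.bijective_id,
      Matrix.one_mul, submatrix_one f hf]
  calc ‖A.submatrix e f‖ ≤ ‖P‖ * ‖A‖ * ‖Q‖ := hPQ ▸ l2_opNorm_mul_mul_le P A Q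
    _ ≤ 1 * ‖A‖ * 1 := by gcongr
    _ = ‖A‖ := by ring

section Blocks

variable {m n m' n' : Type*} [Fintype m] [Fintype n] [Fintype m'] [Fintype n']

lemma IsPartialIsometry.norm_toBlocks₁₁_le_one [DecidableEq n] [DecidableEq n']
    {M : Matrix (m ⊕ m') (n ⊕ n') ℂ} (hM : IsPartialIsometry M) : ‖M.toBlocks₁₁‖ ≤ 1 :=
  (M.l2_opNorm_submatrix_le Sum.inl_injective Sum.inl_injective).trans hM.norm_le_one

lemma IsPartialIsometry.norm_toBlocks₂₂_le_one [DecidableEq n] [DecidableEq n']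
    {M : Matrix (m ⊕ m') (n ⊕ n') ℂ} (hM : IsPartialIsometry M) : ‖M.toBlocks₂₂‖ ≤ 1 :=
  (M.l2_opNorm_submatrix_le Sum.inr_injective Sum.inr_injective).trans hM.norm_le_one

lemma Matrix.toBlocks₁₁_fromBlocks_mul_conjTranspose_mul (z₁ : Matrix m n ℂ) (z₂ : Matrix m n' ℂ)
    (z₃ : Matrix m' n ℂ) (z₄ : Matrix m' n' ℂ) :
    (fromBlocks z₁ z₂ z₃ z₄ * (fromBlocks z₁ z₂ z₃ z₄)ᴴ * fromBlocks z₁ z₂ z₃ z₄).toBlocks₁₁ =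
      z₁ * z₁ᴴ * z₁ + (z₂ * z₂ᴴ * z₁ + z₁ * z₃ᴴ * z₃ + z₂ * z₄ᴴ * z₃) := by
  simp only [fromBlocks_conjTranspose, fromBlocks_multiply, toBlocks_fromBlocks₁₁, Matrix.add_mul]
  abel

lemma IsPartialIsometry.norm_mul_conjTranspose_mul_sub_le_of_fromBlocks [DecidableEq n]
    [DecidableEq n'] {z₁ : Matrix m n ℂ} {z₂ : Matrix m n' ℂ} {z₃ : Matrix m' n ℂ}
    {z₄ : Matrix m' n' ℂ} (hW : IsPartialIsometry (fromBlocks z₁ z₂ z₃ z₄)) {ε : ℝ}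
    (h₂ : ‖z₂‖ ≤ ε) (h₃ : ‖z₃‖ ≤ ε) :
    ‖z₁ * z₁ᴴ * z₁ - z₁‖ ≤ 3 * ε ^ 2 := by
  classical
  have hz₁ : ‖z₁‖ ≤ 1 := by simpa using hW.norm_toBlocks₁₁_le_one
  have hz₄ : ‖z₄‖ ≤ 1 := by simpa using hW.norm_toBlocks₂₂_le_one
  have hε : 0 ≤ ε := (norm_nonneg z₂).trans h₂
  have hR : z₁ * z₁ᴴ * z₁ - z₁ = -(z₂ * z₂ᴴ * z₁ + z₁ * z₃ᴴ * z₃ + z₂ * z₄ᴴ * z₃) := by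
    have h₁₁ := congrArg toBlocks₁₁ hW
    rw [toBlocks₁₁_fromBlocks_mul_conjTranspose_mul, toBlocks_fromBlocks₁₁] at h₁₁
    rw [eq_neg_iff_add_eq_zero, sub_add_eq_add_sub, h₁₁, sub_self]
  have t₁ := l2_opNorm_mul_mul_le z₂ z₂ᴴ z₁
  have t₂ := l2_opNorm_mul_mul_le z₁ z₃ᴴ z₃
  have t₃ := l2_opNorm_mul_mul_le z₂ z₄ᴴ z₃
  rw [l2_opNorm_conjTranspose] at t₁ t₂ t₃
  calc ‖z₁ * z₁ᴴ * z₁ - z₁‖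
      ≤ ‖z₂ * z₂ᴴ * z₁‖ + ‖z₁ * z₃ᴴ * z₃‖ + ‖z₂ * z₄ᴴ * z₃‖ := by
        rw [hR, norm_neg]; exact norm_add₃_le
    _ ≤ ε * ε * 1 + 1 * ε * ε + ε * 1 * ε := by
        gcongr
        · exact t₁.trans (by gcongr)
        · exact t₂.trans (by gcongr)
        · exact t₃.trans (by gcongr)
    _ = 3 * ε ^ 2 := by ring

end Blocks

lemma IsSelfAdjoint.abs_sq_sub_self_le {A : Type*} [CStarAlgebra A] {a : A} (ha : IsSelfAdjoint a)
    {t : ℝ} (ht : t ∈ spectrum ℝ a) : |t ^ 2 - t| ≤ ‖a * a - a‖ := by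
  have := norm_apply_le_norm_cfc (fun t : ℝ => t ^ 2 - t) a ht
  rwa [cfc_sub _ _ a, cfc_pow_id a 2, cfc_id' ℝ a, sq a, Real.norm_eq_abs] at this

noncomputable def invSqrtCutoff (t : ℝ) : ℝ := if t < 1 / 2 then 0 else (√t)⁻¹

lemma invSqrtCutoff_mul_mul_mul_self (t : ℝ) :
    invSqrtCutoff t * (invSqrtCutoff t * t * invSqrtCutoff t) = invSqrtCutoff t := by
  unfold invSqrtCutoff
  split_ifs with ht
  · simp
  · have hs : 0 < √t := Real.sqrt_pos.mpr (by linarith)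
    have hst : √t ^ 2 = t := Real.sq_sqrt (by linarith)
    field_simp
    exact hst.symm

lemma abs_one_sub_invSqrtCutoff_mul_mul_le {t δ : ℝ} (ht : |t ^ 2 - t| ≤ δ) (hδ : δ ≤ 1 / 2) :
    |(1 - invSqrtCutoff t) * t * (1 - invSqrtCutoff t)| ≤ 2 * δ := by
  obtain ⟨hlo, hhi⟩ := abs_le.mp ht
  unfold invSqrtCutoff
  split_ifs with h
  · rw [sub_zero, mul_one, one_mul, abs_le]
    constructor <;> nlinarith
  · set s := √t
    have hs : 0 < s := Real.sqrt_pos.mpr (by linarith)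
    have hst : s ^ 2 = t := Real.sq_sqrt (by linarith)
    have hsq : (1 - s⁻¹) * t * (1 - s⁻¹) = (s - 1) ^ 2 := by
      rw [← hst]; field_simp
    have hgap : |t - 1| ≤ 2 * δ := by
      rw [abs_le]; constructor <;> nlinarith
    rw [hsq, abs_of_nonneg (sq_nonneg _)]
    calc (s - 1) ^ 2 ≤ (s - 1) ^ 2 * (s + 1) ^ 2 :=
          le_mul_of_one_le_right (sq_nonneg _) (by nlinarith)
      _ = |t - 1| ^ 2 := by rw [sq_abs, ← hst]; ring
      _ ≤ (2 * δ) ^ 2 := pow_le_pow_left₀ (abs_nonneg _) hgap 2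
      _ ≤ 2 * δ := by nlinarith [abs_nonneg (t - 1)]

theorem exists_isPartialIsometry_norm_sub_sq_le {m n : Type*} [Fintype m] [Fintype n]
    [DecidableEq n] {x : Matrix m n ℂ} {δ : ℝ} (hx : ‖x‖ ≤ 1) (hδ : δ ≤ 1 / 2)
    (h : ‖x * xᴴ * x - x‖ ≤ δ) :
    ∃ w : Matrix m n ℂ, IsPartialIsometry w ∧ ‖x - w‖ ^ 2 ≤ 2 * δ := by
  classical
  set p := xᴴ * x
  have hp : IsSelfAdjoint p := isHermitian_conjTranspose_mul_self x
  have hpp : ‖p * p - p‖ ≤ δ := calc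
    ‖p * p - p‖ = ‖xᴴ * (x * xᴴ * x - x)‖ := by simp only [p, Matrix.mul_sub, Matrix.mul_assoc]
    _ ≤ ‖xᴴ‖ * ‖x * xᴴ * x - x‖ := l2_opNorm_mul _ _
    _ ≤ 1 * δ := by rw [l2_opNorm_conjTranspose]; gcongr
    _ = δ := one_mul δ
  have hcont (g : ℝ → ℝ) : ContinuousOn g (spectrum ℝ p) := p.finite_real_spectrum.continuousOn g
  set c := cfc invSqrtCutoff p
  have hc : c.IsHermitian := cfc_predicate invSqrtCutoff p
  refine ⟨x * c, ?_, ?_⟩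
  · have hcpc : c * (c * p * c) = c := by
      rw [← cfc_id' ℝ p, ← cfc_mul _ _ _ (hcont _) (hcont _), ← cfc_mul _ _ _ (hcont _) (hcont _),
        ← cfc_mul _ _ _ (hcont _) (hcont _)]
      simp only [invSqrtCutoff_mul_mul_mul_self]
      rfl
    rw [IsPartialIsometry, Matrix.mul_assoc, conjTranspose_mul_self_mul_of_isHermitian x hc,
      Matrix.mul_assoc, hcpc]
  · have hdpd : (1 - c) * p * (1 - c) =
        cfc (fun t => (1 - invSqrtCutoff t) * t * (1 - invSqrtCutoff t)) p := by
      rw [cfc_mul _ _ _ (hcont _) (hcont _), cfc_mul _ _ _ (hcont _) (hcont _),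
        cfc_sub _ _ _ (hcont _) (hcont _), cfc_const_one ℝ p, cfc_id' ℝ p]
    have hsub : x - x * c = x * (1 - c) := by rw [Matrix.mul_sub, Matrix.mul_one]
    calc ‖x - x * c‖ ^ 2 = ‖(1 - c) * p * (1 - c)‖ := by
          rw [sq, hsub, ← l2_opNorm_conjTranspose_mul_self,
            conjTranspose_mul_self_mul_of_isHermitian x (isHermitian_one.sub hc)]
      _ ≤ 2 * δ := by
          rw [hdpd]
          refine norm_cfc_le (by linarith [norm_nonneg (p * p - p)]) fun t ht => ?_
          exact abs_one_sub_invSqrtCutoff_mul_mul_le ((hp.abs_sq_sub_self_le ht).trans hpp) hδ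

/-- If `W = [[z₁, z₂],[z₃, z₄]]` is a partial isometry, `ε < 1/16`, `‖z₂‖ ≤ ε` and
`‖z₃‖ ≤ ε`, then `z₁` is 16ε-close to a partial isometry. -/
theorem stmt2 {m n m' n' : Type*} [Fintype m] [Fintype n] [Fintype m'] [Fintype n']
    [DecidableEq n] [DecidableEq n']
    (z₁ : Matrix m n ℂ) (z₂ : Matrix m n' ℂ) (z₃ : Matrix m' n ℂ) (z₄ : Matrix m' n' ℂ)
    (ε : ℝ) (hε : ε < 1 / 16)
    (hW : IsPartialIsometry (Matrix.fromBlocks z₁ z₂ z₃ z₄))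
    (h₂ : ‖z₂‖ ≤ ε) (h₃ : ‖z₃‖ ≤ ε) :
    ∃ w : Matrix m n ℂ, IsPartialIsometry w ∧ ‖z₁ - w‖ ≤ 16 * ε := by
  have hε₀ : 0 ≤ ε := (norm_nonneg z₂).trans h₂
  have hz₁ : ‖z₁‖ ≤ 1 := by simpa using hW.norm_toBlocks₁₁_le_one
  obtain ⟨w, hw, hdist⟩ := exists_isPartialIsometry_norm_sub_sq_le hz₁ (by nlinarith)
    (hW.norm_mul_conjTranspose_mul_sub_le_of_fromBlocks h₂ h₃)
  refine ⟨w, hw, (pow_le_pow_iff_left₀ (norm_nonneg _) (by positivity) two_ne_zero).mp ?_⟩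
  nlinarith
end

section
/- Let P be a complex matrix which is an orthogonal projection (P = Pᴴ and P² = P), written in 2×2 block form P = [[P₁₁, P₁₂],[P₂₁, P₂₂]] where P₁₁ is m×m and P₂₂ is n×n. Then ‖P₁₁ − P₁₁²‖ = ‖P₁₂‖². -/
/-!
Comparing the `(1,1)` blocks of `P * P = P` and using `P₂₁ = P₁₂ᴴ` gives
`P₁₁ - P₁₁² = P₁₂ P₁₂ᴴ`; the C⋆-identity then turns its norm into `‖P₁₂‖²`.
-/

open Matrix
open scoped Matrix.Norms.L2Operator

namespace Matrix

variable {l m n o p α : Type*}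

theorem toBlocks₁₁_mul [Fintype m] [Fintype n] [NonUnitalNonAssocSemiring α]
    (M : Matrix (l ⊕ o) (m ⊕ n) α) (N : Matrix (m ⊕ n) (p ⊕ o) α) :
    (M * N).toBlocks₁₁ = M.toBlocks₁₁ * N.toBlocks₁₁ + M.toBlocks₁₂ * N.toBlocks₂₁ := by
  rw [← fromBlocks_toBlocks M, ← fromBlocks_toBlocks N, fromBlocks_multiply]
  simp only [toBlocks_fromBlocks₁₁, toBlocks_fromBlocks₁₂, toBlocks_fromBlocks₂₁]

theorem IsHermitian.toBlocks₂₁_eq [Star α] {P : Matrix (m ⊕ n) (m ⊕ n) α} (hP : P.IsHermitian) :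
    P.toBlocks₂₁ = P.toBlocks₁₂ᴴ := by
  ext i j
  exact (congrFun₂ hP.eq (Sum.inr i) (Sum.inl j)).symm

theorem IsHermitian.toBlocks₁₁_sub_mul_self_of_idempotent [Fintype m] [Fintype n]
    [NonUnitalNonAssocRing α] [Star α] {P : Matrix (m ⊕ n) (m ⊕ n) α} (hP : P.IsHermitian)
    (hidem : P * P = P) :
    P.toBlocks₁₁ - P.toBlocks₁₁ * P.toBlocks₁₁ = P.toBlocks₁₂ * P.toBlocks₁₂ᴴ := by
  have h₁₁ := congrArg toBlocks₁₁ hidem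
  rw [toBlocks₁₁_mul, hP.toBlocks₂₁_eq] at h₁₁
  exact sub_eq_iff_eq_add'.mpr h₁₁.symm

theorem l2_opNorm_mul_conjTranspose_self [Fintype m] [Fintype n] [DecidableEq m] [DecidableEq n]
    {𝕜 : Type*} [RCLike 𝕜] (A : Matrix m n 𝕜) : ‖A * Aᴴ‖ = ‖A‖ ^ 2 := by
  simpa only [conjTranspose_conjTranspose, l2_opNorm_conjTranspose, sq] using
    l2_opNorm_conjTranspose_mul_self Aᴴ

end Matrix

/-- If `P` is an orthogonal projection written in 2×2 block form, then
`‖P₁₁ − P₁₁²‖ = ‖P₁₂‖²`. -/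
theorem stmt3 {m n : Type*} [Fintype m] [Fintype n] [DecidableEq m] [DecidableEq n]
    (P : Matrix (m ⊕ n) (m ⊕ n) ℂ)
    (hsa : Pᴴ = P) (hidem : P * P = P) :
    ‖P.toBlocks₁₁ - P.toBlocks₁₁ * P.toBlocks₁₁‖ = ‖P.toBlocks₁₂‖ ^ 2 := by
  rw [IsHermitian.toBlocks₁₁_sub_mul_self_of_idempotent hsa hidem,
    l2_opNorm_mul_conjTranspose_self]
end

section
/- If u and v are m×n complex matrices which are both partial isometries and ‖u − v‖ < 1, then rank u = rank v. -/
open Matrix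
open scoped Matrix.Norms.L2Operator

/-!
Since `uᴴ u uᴴ = uᴴ`, the partial isometry `u` is isometric on the range of `uᴴ`. If `v` killed
a nonzero vector `x` of that range, then `‖x‖ = ‖u x‖ = ‖(u - v) x‖ ≤ ‖u - v‖ ‖x‖ < ‖x‖`.
Hence `ker (v uᴴ) = ker uᴴ`, so `rank u = rank uᴴ ≤ rank (v uᴴ) ≤ rank v`; the reverse
inequality is symmetric.
-/

theorem Matrix.rank_le_rank_of_ker_mulVecLin_le {l m n R : Type*} [Fintype n] [Field R]
    {A : Matrix l n R} {B : Matrix m n R}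
    (h : LinearMap.ker A.mulVecLin ≤ LinearMap.ker B.mulVecLin) : B.rank ≤ A.rank := by
  have hA := A.mulVecLin.finrank_range_add_finrank_ker
  have hB := B.mulVecLin.finrank_range_add_finrank_ker
  have := Submodule.finrank_mono h
  unfold Matrix.rank
  omega

theorem EuclideanSpace.norm_toLp_sq {𝕜 n : Type*} [RCLike 𝕜] [Fintype n] (x : n → 𝕜) :
    ‖WithLp.toLp 2 x‖ ^ 2 = RCLike.re (x ⬝ᵥ star x) := by
  rw [norm_sq_eq_re_inner (𝕜 := 𝕜), EuclideanSpace.inner_toLp_toLp]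

theorem Matrix.norm_toLp_mulVec_eq_of_conjTranspose_mul_self_mulVec {𝕜 m n : Type*} [RCLike 𝕜]
    [Fintype m] [Fintype n] (A : Matrix m n 𝕜) {x : n → 𝕜} (hx : (Aᴴ * A) *ᵥ x = x) :
    ‖WithLp.toLp 2 (A *ᵥ x)‖ = ‖WithLp.toLp 2 x‖ := by
  have hdot : (A *ᵥ x) ⬝ᵥ star (A *ᵥ x) = x ⬝ᵥ star x := by
    rw [dotProduct_comm, star_mulVec, ← dotProduct_mulVec, mulVec_mulVec, hx, dotProduct_comm]
  rw [← sq_eq_sq₀ (norm_nonneg _) (norm_nonneg _), EuclideanSpace.norm_toLp_sq,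
    EuclideanSpace.norm_toLp_sq, hdot]

namespace IsPartialIsometry

variable {m n : Type*} [Fintype m] [Fintype n] {u : Matrix m n ℂ}

theorem conjTranspose_mul_mul_conjTranspose (hu : IsPartialIsometry u) :
    uᴴ * u * uᴴ = uᴴ := by
  simpa [Matrix.mul_assoc] using congrArg Matrix.conjTranspose hu

theorem norm_toLp_mulVec_conjTranspose_mulVec (hu : IsPartialIsometry u) (y : m → ℂ) :
    ‖WithLp.toLp 2 (u *ᵥ (uᴴ *ᵥ y))‖ = ‖WithLp.toLp 2 (uᴴ *ᵥ y)‖ := by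
  refine u.norm_toLp_mulVec_eq_of_conjTranspose_mul_self_mulVec ?_
  rw [mulVec_mulVec, hu.conjTranspose_mul_mul_conjTranspose]

theorem conjTranspose_mulVec_eq_zero_of_norm_sub_lt_one [DecidableEq n] {v : Matrix m n ℂ}
    (hu : IsPartialIsometry u) (h : ‖u - v‖ < 1) {y : m → ℂ} (hy : v *ᵥ (uᴴ *ᵥ y) = 0) :
    uᴴ *ᵥ y = 0 := by
  set x := uᴴ *ᵥ y
  have hle : ‖WithLp.toLp 2 x‖ ≤ ‖u - v‖ * ‖WithLp.toLp 2 x‖ :=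
    calc ‖WithLp.toLp 2 x‖ = ‖WithLp.toLp 2 (u *ᵥ x)‖ :=
          (hu.norm_toLp_mulVec_conjTranspose_mulVec y).symm
      _ = ‖WithLp.toLp 2 ((u - v) *ᵥ x)‖ := by rw [sub_mulVec, hy, sub_zero]
      _ ≤ ‖u - v‖ * ‖WithLp.toLp 2 x‖ := (u - v).l2_opNorm_mulVec (WithLp.toLp 2 x)
  have hzero : ‖WithLp.toLp 2 x‖ = 0 := by nlinarith [norm_nonneg (WithLp.toLp 2 x)]
  simpa using hzero

theorem rank_le_of_norm_sub_lt_one [DecidableEq n] {v : Matrix m n ℂ}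
    (hu : IsPartialIsometry u) (h : ‖u - v‖ < 1) : u.rank ≤ v.rank := by
  open scoped ComplexOrder in
  calc u.rank = uᴴ.rank := (rank_conjTranspose u).symm
    _ ≤ (v * uᴴ).rank := rank_le_rank_of_ker_mulVecLin_le fun y hy =>
        hu.conjTranspose_mulVec_eq_zero_of_norm_sub_lt_one h (by simpa [mulVec_mulVec] using hy)
    _ ≤ v.rank := rank_mul_le_left v uᴴ

end IsPartialIsometry

/-- Partial isometries at distance less than 1 have equal rank. -/
theorem stmt10 {m n : Type*} [Fintype m] [Fintype n] [DecidableEq n]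
    (u v : Matrix m n ℂ) (hu : IsPartialIsometry u) (hv : IsPartialIsometry v)
    (h : ‖u - v‖ < 1) :
    u.rank = v.rank :=
  le_antisymm (hu.rank_le_of_norm_sub_lt_one h)
    (hv.rank_le_of_norm_sub_lt_one (by rwa [norm_sub_rev]))
end
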